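/- (Koga's criterion, type D, case (1B)) Let N ≥ 2 and u, v ∈ B_sp^+. Then u ⊗ v lies in the connected component of (+,…,+) ⊗ (+,…,+) in B_sp^+ × B_sp^+ (tensor-product type-D_N operators) if and only if the pair of columns (t(u), t(v)) is N-semistandard. -/

import Mathlib

namespace CrystalPaper

/-- A sign sequence of length `N`: `true` codes `+`, `false` codes `−`. -/
abbrev Seq (N : ℕ) := Fin N → Bool

/-- The constant sequence `(+,…,+)`. -/
def top (N : ℕ) : Seq N := fun _ => true

/-- The constant sequence `(−,…,−)`. -/
def bot (N : ℕ) : Seq N := fun _ => false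

/-- The sequence `(+^k, −^{N−k})` (first `k` entries `+`, the rest `−`). -/
def lowSeq (N k : ℕ) : Seq N := fun i => decide ((i : ℕ) < k)

/-- The number of `−` entries of a sign sequence. -/
def minusCount (N : ℕ) (b : Seq N) : ℕ :=
  (Finset.univ.filter (fun i => b i = false)).card

/-- `B_sp^+`: sign sequences with an even number of `−` entries. -/
def BspPlus (N : ℕ) (b : Seq N) : Prop := Even (minusCount N b)

/-- `B_sp^−`: sign sequences with an odd number of `−` entries. -/
def BspMinus (N : ℕ) (b : Seq N) : Prop := Odd (minusCount N b)

/-- The type-`D_N` Kashiwara raising operator `ẽ_l`, labels `1 ≤ l ≤ N`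
(`none` codes `0`).  For `1 ≤ l ≤ N−1` it replaces `(b_l, b_{l+1}) = (+,−)` by `(−,+)`;
`ẽ_N` replaces `(b_{N−1}, b_N) = (+,+)` by `(−,−)`. -/
def eD (N l : ℕ) (b : Seq N) : Option (Seq N) :=
  if h : 1 ≤ l ∧ l + 1 ≤ N then
    let i : Fin N := ⟨l - 1, by omega⟩
    let j : Fin N := ⟨l, by omega⟩
    if b i = true ∧ b j = false then
      some (Function.update (Function.update b i false) j true)
    else none
  else if h2 : l = N ∧ 2 ≤ N then
    let i : Fin N := ⟨N - 2, by omega⟩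
    let j : Fin N := ⟨N - 1, by omega⟩
    if b i = true ∧ b j = true then
      some (Function.update (Function.update b i false) j false)
    else none
  else none

/-- The type-`D_N` Kashiwara lowering operator `f̃_l`, labels `1 ≤ l ≤ N`.
For `1 ≤ l ≤ N−1` it replaces `(b_l, b_{l+1}) = (−,+)` by `(+,−)`;
`f̃_N` replaces `(b_{N−1}, b_N) = (−,−)` by `(+,+)`. -/
def fD (N l : ℕ) (b : Seq N) : Option (Seq N) :=
  if h : 1 ≤ l ∧ l + 1 ≤ N then
    let i : Fin N := ⟨l - 1, by omega⟩
    let j : Fin N := ⟨l, by omega⟩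
    if b i = false ∧ b j = true then
      some (Function.update (Function.update b i true) j false)
    else none
  else if h2 : l = N ∧ 2 ≤ N then
    let i : Fin N := ⟨N - 2, by omega⟩
    let j : Fin N := ⟨N - 1, by omega⟩
    if b i = false ∧ b j = false then
      some (Function.update (Function.update b i true) j true)
    else none
  else none

/-- `n`-fold iteration of a partial operator. -/
def iterOp {σ : Type*} (f : σ → Option σ) : ℕ → σ → Option σ
  | 0, x => some x
  | n + 1, x => (f x).bind (iterOp f n)

/-- `max {n ≥ 0 : f^n x ≠ 0}`, as a supremum in `ℕ`.  Used for the string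
lengths `ε_l(x) = max{n : ẽ_l^n x ≠ 0}` and `φ_l(x) = max{n : f̃_l^n x ≠ 0}`. -/
noncomputable def opMax {σ : Type*} (f : σ → Option σ) (x : σ) : ℕ :=
  sSup {n | iterOp f n x ≠ none}

/-- The tensor-product raising operator `ẽ_l` on pairs (lowest-weight convention):
`ẽ_l(x ⊗ y) = x ⊗ ẽ_l y` if `ε_l(x) ≤ φ_l(y)`, and `ẽ_l x ⊗ y` otherwise. -/
noncomputable def teD (N l : ℕ) (p : Seq N × Seq N) : Option (Seq N × Seq N) :=
  if opMax (eD N l) p.1 ≤ opMax (fD N l) p.2 then (eD N l p.2).map fun y => (p.1, y)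
  else (eD N l p.1).map fun x => (x, p.2)

/-- The tensor-product lowering operator `f̃_l` on pairs (lowest-weight convention):
`f̃_l(x ⊗ y) = x ⊗ f̃_l y` if `ε_l(x) < φ_l(y)`, and `f̃_l x ⊗ y` otherwise. -/
noncomputable def tfD (N l : ℕ) (p : Seq N × Seq N) : Option (Seq N × Seq N) :=
  if opMax (eD N l) p.1 < opMax (fD N l) p.2 then (fD N l p.2).map fun y => (p.1, y)
  else (fD N l p.1).map fun x => (x, p.2)

/-- Connectedness in the tensor product of two type-`D_N` spin crystals:
the equivalence relation generated by single applications of the operators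
`ẽ_l`, `f̃_l` with `1 ≤ l ≤ N`. -/
def ConnD (N : ℕ) (p q : Seq N × Seq N) : Prop :=
  Relation.EqvGen (fun p q => ∃ l, 1 ≤ l ∧ l ≤ N ∧ (teD N l p = some q ∨ tfD N l p = some q)) p q

/-- The column `t(b)` encoding a sign sequence `b`:
the increasing list of the letters `{a : b_a = +} ∪ {ā : b_a = −}` of the alphabet
`S = {1,…,N,N̄,…,1̄}`, where the letter `a` is coded by the natural number `a`
and the barred letter `ā` by `2N+1−a` (so that `N̄,…,1̄` are coded by `N+1,…,2N`). -/
def colList (N : ℕ) (b : Seq N) : List ℕ :=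
  Finset.sort
    (Finset.image (fun i : Fin N => if b i then (i : ℕ) + 1 else 2 * N - (i : ℕ)) Finset.univ)
    (· ≤ ·)

/-- The type-`D` partial order `⪯` on coded letters: the natural order on the codes,
except that `N` and `N̄` (codes `N` and `N+1`) are incomparable. -/
def preceqD (N x y : ℕ) : Prop := x = y ∨ (x < y ∧ ¬(x = N ∧ y = N + 1))

/-- The pair of columns `(a, c)` is `k`-semistandard: `c_r ⪯ a_{N−k+r}` for all
`1 ≤ r ≤ k` (entries are `1`-based; by convention this is false for `k > N`). -/
def kSemiD (N k : ℕ) (a c : List ℕ) : Prop :=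
  k ≤ N ∧ ∀ r, 1 ≤ r → r ≤ k → preceqD N (c.getD (r - 1) 0) (a.getD (N - k + r - 1) 0)

section Aux
variable {N : ℕ}


/-- prefix plus-count -/
def pc (b : Seq N) (k : ℕ) : ℕ := ∑ i : Fin N, if (i : ℕ) < k ∧ b i = true then 1 else 0

lemma pc_zero (b : Seq N) : pc b 0 = 0 := by simp [pc]

lemma pc_succ_lt (b : Seq N) {k : ℕ} (h : k < N) :
    pc b (k + 1) = pc b k + (if b ⟨k, h⟩ = true then 1 else 0) := by
  unfold pc
  have step : ∀ i : Fin N, (if (i : ℕ) < k + 1 ∧ b i = true then 1 else 0)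
      = (if (i : ℕ) < k ∧ b i = true then 1 else 0)
        + (if (i : ℕ) = k ∧ b i = true then 1 else 0) := by
    intro i
    by_cases h1 : (i : ℕ) < k <;> by_cases h2 : b i = true <;> by_cases h3 : (i : ℕ) = k <;>
      simp [h1, h2, h3] <;> omega
  rw [Finset.sum_congr rfl fun i _ => step i, Finset.sum_add_distrib]
  congr 1
  rw [Finset.sum_eq_single (⟨k, h⟩ : Fin N)]
  · simp
  · intro j _ hj
    have : (j : ℕ) ≠ k := fun hc => hj (Fin.ext hc)
    simp [this]
  · simp

lemma pc_succ_ge (b : Seq N) {k : ℕ} (h : N ≤ k) : pc b (k + 1) = pc b k := by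
  unfold pc
  apply Finset.sum_congr rfl
  intro i _
  have hi : (i : ℕ) < N := i.isLt
  have h1 : ((i:ℕ) < k + 1) ↔ ((i:ℕ) < k) := by omega
  simp only [h1]

lemma pc_mono (b : Seq N) : Monotone (pc b) := by
  apply monotone_nat_of_le_succ
  intro k
  by_cases h : k < N
  · rw [pc_succ_lt b h]; omega
  · rw [pc_succ_ge b (by omega)]

lemma pc_ge (b : Seq N) {k : ℕ} (h : N ≤ k) : pc b k = pc b N := by
  induction k with
  | zero => have h0 : N = 0 := (by omega); subst h0; rfl
  | succ n ih =>
    rcases Nat.lt_or_ge n N with h1 | h1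
    · have : n + 1 = N := by omega
      rw [this]
    · rw [pc_succ_ge b h1, ih h1]

lemma pc_le (b : Seq N) (k : ℕ) : pc b k ≤ k := by
  induction k with
  | zero => simp [pc_zero]
  | succ n ih =>
    by_cases h : n < N
    · rw [pc_succ_lt b h]; split <;> omega
    · rw [pc_succ_ge b (by omega)]; omega

lemma pc_top (k : ℕ) (h : k ≤ N) : pc (top N) k = k := by
  induction k with
  | zero => simp [pc_zero]
  | succ n ih => rw [pc_succ_lt _ (by omega)]; simp [top, ih (by omega)]

lemma pc_update (b : Seq N) (a : Fin N) (x : Bool) (k : ℕ) :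
    pc (Function.update b a x) k + (if (a : ℕ) < k ∧ b a = true then 1 else 0)
      = pc b k + (if (a : ℕ) < k ∧ x = true then 1 else 0) := by
  unfold pc
  have key : (fun i : Fin N => if (i : ℕ) < k ∧ (Function.update b a x) i = true then 1 else 0)
      = Function.update (fun i : Fin N => if (i : ℕ) < k ∧ b i = true then 1 else 0) a
          (if (a : ℕ) < k ∧ x = true then 1 else 0) := by
    funext i
    by_cases hi : i = a
    · subst hi; simp
    · simp [Function.update_of_ne hi]
  rw [key, Finset.sum_update_of_mem (Finset.mem_univ a),
    ← Finset.sum_erase_add _ _ (Finset.mem_univ a), Finset.sdiff_singleton_eq_erase]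
  omega

lemma pc_update2 (b : Seq N) (i j : Fin N) (hij : j ≠ i) (x y : Bool) (k : ℕ) :
    pc (Function.update (Function.update b i x) j y) k
        + (if (i : ℕ) < k ∧ b i = true then 1 else 0)
        + (if (j : ℕ) < k ∧ b j = true then 1 else 0)
      = pc b k + (if (i : ℕ) < k ∧ x = true then 1 else 0)
        + (if (j : ℕ) < k ∧ y = true then 1 else 0) := by
  have h1 := pc_update (Function.update b i x) j y k
  have h2 := pc_update b i x k
  rw [Function.update_of_ne hij] at h1
  omega

/-! ### Operator specifications -/

lemma fD_lt_eq {l : ℕ} (hl1 : 1 ≤ l) (hl2 : l < N) (b : Seq N) :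
    fD N l b = if b ⟨l - 1, by omega⟩ = false ∧ b ⟨l, by omega⟩ = true
      then some (Function.update (Function.update b ⟨l - 1, by omega⟩ true) ⟨l, by omega⟩ false)
      else none := by
  unfold fD
  rw [dif_pos ⟨hl1, by omega⟩]

lemma eD_lt_eq {l : ℕ} (hl1 : 1 ≤ l) (hl2 : l < N) (b : Seq N) :
    eD N l b = if b ⟨l - 1, by omega⟩ = true ∧ b ⟨l, by omega⟩ = false
      then some (Function.update (Function.update b ⟨l - 1, by omega⟩ false) ⟨l, by omega⟩ true)
      else none := by
  unfold eD
  rw [dif_pos ⟨hl1, by omega⟩]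

lemma fD_N_eq (hN : 2 ≤ N) (b : Seq N) :
    fD N N b = if b ⟨N - 2, by omega⟩ = false ∧ b ⟨N - 1, by omega⟩ = false
      then some (Function.update (Function.update b ⟨N - 2, by omega⟩ true) ⟨N - 1, by omega⟩ true)
      else none := by
  unfold fD
  rw [dif_neg (by omega), dif_pos ⟨rfl, hN⟩]

lemma eD_N_eq (hN : 2 ≤ N) (b : Seq N) :
    eD N N b = if b ⟨N - 2, by omega⟩ = true ∧ b ⟨N - 1, by omega⟩ = true
      then some (Function.update (Function.update b ⟨N - 2, by omega⟩ false) ⟨N - 1, by omega⟩ false)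
      else none := by
  unfold eD
  rw [dif_neg (by omega), dif_pos ⟨rfl, hN⟩]

lemma fD_lt_spec {l : ℕ} (hl1 : 1 ≤ l) (hl2 : l < N) {b c : Seq N} (h : fD N l b = some c) :
    b ⟨l - 1, by omega⟩ = false ∧ b ⟨l, by omega⟩ = true ∧
      (∀ k, pc c k + (if l < k then 1 else 0) = pc b k + (if l ≤ k then 1 else 0)) := by
  rw [fD_lt_eq hl1 hl2] at h
  split at h
  case isFalse => exact absurd h (by simp)
  case isTrue hp =>
    obtain ⟨h1, h2⟩ := hp
    refine ⟨h1, h2, fun k => ?_⟩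
    have hij : (⟨l, by omega⟩ : Fin N) ≠ ⟨l - 1, by omega⟩ := Fin.ne_of_val_ne (by simp; omega)
    have e := pc_update2 b ⟨l - 1, by omega⟩ ⟨l, by omega⟩ hij true false k
    have hc : c = Function.update (Function.update b ⟨l - 1, by omega⟩ true) ⟨l, by omega⟩ false :=
      (Option.some.injEq .. ▸ h).symm
    rw [← hc] at e
    simp only [h1, h2, Fin.val_mk, Bool.false_eq_true, Bool.true_eq_false, false_and, and_false,
      and_true, true_and, if_false, if_true] at e
    split_ifs at e ⊢ <;> omega

lemma eD_lt_spec {l : ℕ} (hl1 : 1 ≤ l) (hl2 : l < N) {b c : Seq N} (h : eD N l b = some c) :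
    b ⟨l - 1, by omega⟩ = true ∧ b ⟨l, by omega⟩ = false ∧
      (∀ k, pc c k + (if l ≤ k then 1 else 0) = pc b k + (if l < k then 1 else 0)) := by
  rw [eD_lt_eq hl1 hl2] at h
  split at h
  case isFalse => exact absurd h (by simp)
  case isTrue hp =>
    obtain ⟨h1, h2⟩ := hp
    refine ⟨h1, h2, fun k => ?_⟩
    have hij : (⟨l, by omega⟩ : Fin N) ≠ ⟨l - 1, by omega⟩ := Fin.ne_of_val_ne (by simp; omega)
    have e := pc_update2 b ⟨l - 1, by omega⟩ ⟨l, by omega⟩ hij false true k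
    have hc : c = Function.update (Function.update b ⟨l - 1, by omega⟩ false) ⟨l, by omega⟩ true :=
      (Option.some.injEq .. ▸ h).symm
    rw [← hc] at e
    simp only [h1, h2, Fin.val_mk, Bool.false_eq_true, Bool.true_eq_false, false_and, and_false,
      and_true, true_and, if_false, if_true] at e
    split_ifs at e ⊢ <;> omega

lemma fD_N_spec (hN : 2 ≤ N) {b c : Seq N} (h : fD N N b = some c) :
    b ⟨N - 2, by omega⟩ = false ∧ b ⟨N - 1, by omega⟩ = false ∧
      (∀ k, pc c k = pc b k + (if N - 1 ≤ k then 1 else 0) + (if N ≤ k then 1 else 0)) := by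
  rw [fD_N_eq hN] at h
  split at h
  case isFalse => exact absurd h (by simp)
  case isTrue hp =>
    obtain ⟨h1, h2⟩ := hp
    refine ⟨h1, h2, fun k => ?_⟩
    have hij : (⟨N - 1, by omega⟩ : Fin N) ≠ ⟨N - 2, by omega⟩ := Fin.ne_of_val_ne (by simp; omega)
    have e := pc_update2 b ⟨N - 2, by omega⟩ ⟨N - 1, by omega⟩ hij true true k
    have hc : c = Function.update (Function.update b ⟨N - 2, by omega⟩ true) ⟨N - 1, by omega⟩ true :=
      (Option.some.injEq .. ▸ h).symm
    rw [← hc] at e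
    simp only [h1, h2, Fin.val_mk, Bool.false_eq_true, Bool.true_eq_false, false_and, and_false,
      and_true, true_and, if_false, if_true] at e
    split_ifs at e ⊢ <;> omega

lemma eD_N_spec (hN : 2 ≤ N) {b c : Seq N} (h : eD N N b = some c) :
    b ⟨N - 2, by omega⟩ = true ∧ b ⟨N - 1, by omega⟩ = true ∧
      (∀ k, pc c k + (if N - 1 ≤ k then 1 else 0) + (if N ≤ k then 1 else 0) = pc b k) := by
  rw [eD_N_eq hN] at h
  split at h
  case isFalse => exact absurd h (by simp)
  case isTrue hp =>
    obtain ⟨h1, h2⟩ := hp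
    refine ⟨h1, h2, fun k => ?_⟩
    have hij : (⟨N - 1, by omega⟩ : Fin N) ≠ ⟨N - 2, by omega⟩ := Fin.ne_of_val_ne (by simp; omega)
    have e := pc_update2 b ⟨N - 2, by omega⟩ ⟨N - 1, by omega⟩ hij false false k
    have hc : c = Function.update (Function.update b ⟨N - 2, by omega⟩ false) ⟨N - 1, by omega⟩ false :=
      (Option.some.injEq .. ▸ h).symm
    rw [← hc] at e
    simp only [h1, h2, Fin.val_mk, Bool.false_eq_true, Bool.true_eq_false, false_and, and_false,
      and_true, true_and, if_false, if_true] at e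
    split_ifs at e ⊢ <;> omega

/-! ### Disjointness and inverses -/

lemma fD_eD_none {l : ℕ} (hl1 : 1 ≤ l) (hl2 : l ≤ N) (hN : 2 ≤ N) {b : Seq N}
    (h : fD N l b ≠ none) : eD N l b = none := by
  rcases Nat.lt_or_ge l N with h' | h'
  · rw [fD_lt_eq hl1 h'] at h
    rw [eD_lt_eq hl1 h']
    split at h
    case isTrue hp => rw [if_neg (by simp [hp.1])]
    case isFalse => simp at h
  · have hlN : l = N := by omega
    rw [hlN] at h ⊢
    rw [fD_N_eq hN] at h
    rw [eD_N_eq hN]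
    split at h
    case isTrue hp => rw [if_neg (by simp [hp.1])]
    case isFalse => simp at h

lemma eD_fD_none {l : ℕ} (hl1 : 1 ≤ l) (hl2 : l ≤ N) (hN : 2 ≤ N) {b : Seq N}
    (h : eD N l b ≠ none) : fD N l b = none := by
  rcases Nat.lt_or_ge l N with h' | h'
  · rw [eD_lt_eq hl1 h'] at h
    rw [fD_lt_eq hl1 h']
    split at h
    case isTrue hp => rw [if_neg (by simp [hp.1])]
    case isFalse => simp at h
  · have hlN : l = N := by omega
    rw [hlN] at h ⊢
    rw [eD_N_eq hN] at h
    rw [fD_N_eq hN]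
    split at h
    case isTrue hp => rw [if_neg (by simp [hp.1])]
    case isFalse => simp at h

lemma update2_cancel {b : Seq N} {i j : Fin N} (hij : i ≠ j) {x y : Bool} :
    Function.update (Function.update (Function.update (Function.update b i x) j y) i (b i)) j (b j)
      = b := by
  funext a
  rcases eq_or_ne a j with rfl | haj
  · simp
  · rcases eq_or_ne a i with rfl | hai
    · simp [Function.update_of_ne haj, hij]
    · simp [Function.update_of_ne haj, Function.update_of_ne hai]

lemma fD_eD_inv {l : ℕ} (hl1 : 1 ≤ l) (hl2 : l ≤ N) (hN : 2 ≤ N) {b c : Seq N}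
    (h : fD N l b = some c) : eD N l c = some b := by
  rcases Nat.lt_or_ge l N with h' | h'
  · rw [fD_lt_eq hl1 h'] at h
    rw [eD_lt_eq hl1 h']
    split at h
    case isFalse => simp at h
    case isTrue hp =>
      have hc : c = Function.update (Function.update b ⟨l - 1, by omega⟩ true) ⟨l, by omega⟩ false :=
        (Option.some.injEq .. ▸ h).symm
      have hij : (⟨l - 1, by omega⟩ : Fin N) ≠ ⟨l, by omega⟩ := Fin.ne_of_val_ne (by simp; omega)
      have key : Function.update (Function.update c ⟨l - 1, by omega⟩ (b ⟨l - 1, by omega⟩))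
          ⟨l, by omega⟩ (b ⟨l, by omega⟩) = b := by
        rw [hc]; exact update2_cancel hij
      rw [hp.1, hp.2] at key
      rw [if_pos ⟨by rw [hc, Function.update_of_ne hij, Function.update_self], by rw [hc, Function.update_self]⟩]
      exact congrArg some key
  · have hlN : l = N := by omega
    rw [hlN] at h ⊢
    rw [fD_N_eq hN] at h
    rw [eD_N_eq hN]
    split at h
    case isFalse => simp at h
    case isTrue hp =>
      have hc : c = Function.update (Function.update b ⟨N - 2, by omega⟩ true) ⟨N - 1, by omega⟩ true :=
        (Option.some.injEq .. ▸ h).symm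
      have hij : (⟨N - 2, by omega⟩ : Fin N) ≠ ⟨N - 1, by omega⟩ := Fin.ne_of_val_ne (by simp; omega)
      have key : Function.update (Function.update c ⟨N - 2, by omega⟩ (b ⟨N - 2, by omega⟩))
          ⟨N - 1, by omega⟩ (b ⟨N - 1, by omega⟩) = b := by
        rw [hc]; exact update2_cancel hij
      rw [hp.1, hp.2] at key
      rw [if_pos ⟨by rw [hc, Function.update_of_ne hij, Function.update_self], by rw [hc, Function.update_self]⟩]
      exact congrArg some key

lemma eD_fD_inv {l : ℕ} (hl1 : 1 ≤ l) (hl2 : l ≤ N) (hN : 2 ≤ N) {b c : Seq N}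
    (h : eD N l b = some c) : fD N l c = some b := by
  rcases Nat.lt_or_ge l N with h' | h'
  · rw [eD_lt_eq hl1 h'] at h
    rw [fD_lt_eq hl1 h']
    split at h
    case isFalse => simp at h
    case isTrue hp =>
      have hc : c = Function.update (Function.update b ⟨l - 1, by omega⟩ false) ⟨l, by omega⟩ true :=
        (Option.some.injEq .. ▸ h).symm
      have hij : (⟨l - 1, by omega⟩ : Fin N) ≠ ⟨l, by omega⟩ := Fin.ne_of_val_ne (by simp; omega)
      have key : Function.update (Function.update c ⟨l - 1, by omega⟩ (b ⟨l - 1, by omega⟩))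
          ⟨l, by omega⟩ (b ⟨l, by omega⟩) = b := by
        rw [hc]; exact update2_cancel hij
      rw [hp.1, hp.2] at key
      rw [if_pos ⟨by rw [hc, Function.update_of_ne hij, Function.update_self],
        by rw [hc, Function.update_self]⟩]
      exact congrArg some key
  · have hlN : l = N := by omega
    rw [hlN] at h ⊢
    rw [eD_N_eq hN] at h
    rw [fD_N_eq hN]
    split at h
    case isFalse => simp at h
    case isTrue hp =>
      have hc : c = Function.update (Function.update b ⟨N - 2, by omega⟩ false) ⟨N - 1, by omega⟩ false :=
        (Option.some.injEq .. ▸ h).symm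
      have hij : (⟨N - 2, by omega⟩ : Fin N) ≠ ⟨N - 1, by omega⟩ := Fin.ne_of_val_ne (by simp; omega)
      have key : Function.update (Function.update c ⟨N - 2, by omega⟩ (b ⟨N - 2, by omega⟩))
          ⟨N - 1, by omega⟩ (b ⟨N - 1, by omega⟩) = b := by
        rw [hc]; exact update2_cancel hij
      rw [hp.1, hp.2] at key
      rw [if_pos ⟨by rw [hc, Function.update_of_ne hij, Function.update_self],
        by rw [hc, Function.update_self]⟩]
      exact congrArg some key

/-! ### String lengths -/

lemma opMax_zero {σ : Type*} (f : σ → Option σ) (x : σ) (h : f x = none) : opMax f x = 0 := by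
  unfold opMax
  have hs : {n | iterOp f n x ≠ none} = {0} := by
    ext n
    cases n with
    | zero => simp [iterOp]
    | succ m => simp [iterOp, h]
  rw [hs, csSup_singleton]

lemma opMax_one {σ : Type*} (f : σ → Option σ) (x y : σ) (h : f x = some y) (h2 : f y = none) :
    opMax f x = 1 := by
  unfold opMax
  have hs : {n | iterOp f n x ≠ none} = {0, 1} := by
    ext n
    match n with
    | 0 => simp [iterOp]
    | 1 => simp [iterOp, h]
    | (m + 2) =>
      simp only [Set.mem_setOf_eq, iterOp, h, Option.bind_some, h2, Option.bind_none]
      simp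
  rw [hs]
  have h01 : ({0, 1} : Set ℕ) = Set.Iic 1 := by
    ext n; simp [Set.mem_Iic]; omega
  rw [h01, csSup_Iic]

lemma opMax_fD {l : ℕ} (hl1 : 1 ≤ l) (hl2 : l ≤ N) (hN : 2 ≤ N) (b : Seq N) :
    opMax (fD N l) b = if fD N l b = none then 0 else 1 := by
  rcases hfb : fD N l b with _ | c
  · rw [if_pos rfl]; exact opMax_zero _ _ hfb
  · rw [if_neg (by simp)]
    have he := fD_eD_inv hl1 hl2 hN hfb
    exact opMax_one _ _ _ hfb (eD_fD_none hl1 hl2 hN (by simp [he]))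

lemma opMax_eD {l : ℕ} (hl1 : 1 ≤ l) (hl2 : l ≤ N) (hN : 2 ≤ N) (b : Seq N) :
    opMax (eD N l) b = if eD N l b = none then 0 else 1 := by
  rcases hfb : eD N l b with _ | c
  · rw [if_pos rfl]; exact opMax_zero _ _ hfb
  · rw [if_neg (by simp)]
    have he := eD_fD_inv hl1 hl2 hN hfb
    exact opMax_one _ _ _ hfb (fD_eD_none hl1 hl2 hN (by simp [he]))

/-! ### Tensor operator case analysis -/

lemma tfD_cases {l : ℕ} (hl1 : 1 ≤ l) (hl2 : l ≤ N) (hN : 2 ≤ N) {u v u' v' : Seq N}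
    (h : tfD N l (u, v) = some (u', v')) :
    (u' = u ∧ fD N l v = some v' ∧ eD N l u = none) ∨
      (v' = v ∧ fD N l u = some u' ∧ fD N l v = none) := by
  unfold tfD at h
  dsimp only at h
  rw [opMax_eD hl1 hl2 hN, opMax_fD hl1 hl2 hN] at h
  by_cases hcond : (if eD N l u = none then 0 else 1) < (if fD N l v = none then (0 : ℕ) else 1)
  · rw [if_pos hcond] at h
    left
    have h1 : eD N l u = none := by
      by_contra hne
      rw [if_neg hne] at hcond
      split_ifs at hcond <;> omega
    rcases hfv : fD N l v with _ | v0
    · rw [hfv] at h; simp at h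
    · rw [hfv] at h
      simp only [Option.map_some, Option.some.injEq, Prod.mk.injEq] at h
      exact ⟨h.1.symm, by rw [h.2], h1⟩
  · rw [if_neg hcond] at h
    right
    rcases hfu : fD N l u with _ | u0
    · rw [hfu] at h; simp at h
    · rw [hfu] at h
      simp only [Option.map_some, Option.some.injEq, Prod.mk.injEq] at h
      have h1 : eD N l u = none := fD_eD_none hl1 hl2 hN (by simp [hfu])
      have h2 : fD N l v = none := by
        by_contra hne
        rw [if_pos h1, if_neg hne] at hcond
        omega
      exact ⟨h.2.symm, by rw [h.1], h2⟩

lemma teD_cases {l : ℕ} (hl1 : 1 ≤ l) (hl2 : l ≤ N) (hN : 2 ≤ N) {u v u' v' : Seq N}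
    (h : teD N l (u, v) = some (u', v')) :
    (u' = u ∧ eD N l v = some v' ∧ eD N l u = none) ∨
      (v' = v ∧ eD N l u = some u' ∧ fD N l v = none) := by
  unfold teD at h
  dsimp only at h
  rw [opMax_eD hl1 hl2 hN, opMax_fD hl1 hl2 hN] at h
  by_cases hcond : (if eD N l u = none then 0 else 1) ≤ (if fD N l v = none then (0 : ℕ) else 1)
  · rw [if_pos hcond] at h
    left
    rcases hev : eD N l v with _ | v0
    · rw [hev] at h; simp at h
    · rw [hev] at h
      simp only [Option.map_some, Option.some.injEq, Prod.mk.injEq] at h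
      have hfv : fD N l v = none := eD_fD_none hl1 hl2 hN (by simp [hev])
      have h1 : eD N l u = none := by
        by_contra hne
        rw [if_neg hne, if_pos hfv] at hcond
        omega
      exact ⟨h.1.symm, by rw [h.2], h1⟩
  · rw [if_neg hcond] at h
    right
    rcases heu : eD N l u with _ | u0
    · rw [heu] at h; simp at h
    · rw [heu] at h
      simp only [Option.map_some, Option.some.injEq, Prod.mk.injEq] at h
      have h2 : fD N l v = none := by
        by_contra hne
        rw [if_neg hne] at hcond
        split_ifs at hcond <;> omega
      exact ⟨h.2.symm, by rw [h.1], h2⟩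

lemma tfD_teD {l : ℕ} (hl1 : 1 ≤ l) (hl2 : l ≤ N) (hN : 2 ≤ N) {u v u' v' : Seq N}
    (h : tfD N l (u, v) = some (u', v')) : teD N l (u', v') = some (u, v) := by
  rcases tfD_cases hl1 hl2 hN h with ⟨rfl, hfv, heu⟩ | ⟨rfl, hfu, hfv⟩
  · unfold teD
    dsimp only
    rw [opMax_eD hl1 hl2 hN, opMax_fD hl1 hl2 hN, if_pos (by rw [if_pos heu]; omega)]
    simp [fD_eD_inv hl1 hl2 hN hfv]
  · unfold teD
    dsimp only
    have heu' : eD N l u' = some u := fD_eD_inv hl1 hl2 hN hfu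
    rw [opMax_eD hl1 hl2 hN, opMax_fD hl1 hl2 hN,
      if_neg (by rw [if_neg (by simp [heu']), if_pos hfv]; omega)]
    simp [heu']

lemma teD_tfD {l : ℕ} (hl1 : 1 ≤ l) (hl2 : l ≤ N) (hN : 2 ≤ N) {u v u' v' : Seq N}
    (h : teD N l (u, v) = some (u', v')) : tfD N l (u', v') = some (u, v) := by
  rcases teD_cases hl1 hl2 hN h with ⟨rfl, hev, heu⟩ | ⟨rfl, heu, hfv⟩
  · unfold tfD
    dsimp only
    have hfv' : fD N l v' = some v := eD_fD_inv hl1 hl2 hN hev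
    rw [opMax_eD hl1 hl2 hN, opMax_fD hl1 hl2 hN,
      if_pos (by rw [if_pos heu, if_neg (by simp [hfv'])]; omega)]
    simp [hfv']
  · unfold tfD
    dsimp only
    rw [opMax_eD hl1 hl2 hN, opMax_fD hl1 hl2 hN, if_neg (by rw [if_pos hfv]; omega)]
    simp [eD_fD_inv hl1 hl2 hN heu]

/-! ### The dominance invariant -/

def Good (u v : Seq N) : Prop :=
  (∀ k, pc u k ≤ pc v k) ∧ Even (minusCount N u) ∧ Even (minusCount N v)

lemma pc_N_eq (b : Seq N) : pc b N = (Finset.univ.filter (fun i => b i = true)).card := by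
  rw [Finset.card_filter]
  unfold pc
  apply Finset.sum_congr rfl
  intro i _
  have : (i : ℕ) < N := i.isLt
  simp [this]

lemma pc_N_add_mc (b : Seq N) : pc b N + minusCount N b = N := by
  rw [pc_N_eq]
  unfold minusCount
  have := Finset.card_filter_add_card_filter_not
    (s := (Finset.univ : Finset (Fin N))) (p := fun i => b i = true)
  simp only [Finset.card_univ, Fintype.card_fin] at this
  have hfeq : (Finset.filter (fun a => ¬ b a = true) Finset.univ)
      = Finset.filter (fun i => b i = false) Finset.univ := by
    apply Finset.filter_congr
    intro i _
    simp
  rw [hfeq] at this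
  exact this

lemma good_parity {u v : Seq N} (hg : Good u v) : pc u N % 2 = pc v N % 2 := by
  obtain ⟨-, hu, hv⟩ := hg
  obtain ⟨a, ha⟩ := hu
  obtain ⟨c, hc⟩ := hv
  have h1 := pc_N_add_mc u
  have h2 := pc_N_add_mc v
  omega

lemma mc_top : minusCount N (top N) = 0 := by
  unfold minusCount top
  simp

lemma good_top : Good (top N) (top N) :=
  ⟨fun _ => le_rfl, by rw [mc_top]; exact Even.zero, by rw [mc_top]; exact Even.zero⟩

lemma pc_le_pc_top (b : Seq N) (k : ℕ) : pc b k ≤ pc (top N) k := by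
  unfold pc
  apply Finset.sum_le_sum
  intro i _
  by_cases h1 : (i : ℕ) < k <;> by_cases h2 : b i = true <;> simp [h1, h2, top]

lemma ne_top_exists_false {b : Seq N} (h : b ≠ top N) : ∃ i : Fin N, b i = false := by
  by_contra hc
  push_neg at hc
  exact h (funext fun i => by have := hc i; simp [top]; revert this; cases b i <;> simp)

lemma pc_lt_top {b : Seq N} {i : Fin N} (hi : b i = false) :
    pc b ((i : ℕ) + 1) < pc (top N) ((i : ℕ) + 1) := by
  have h1 : pc b ((i : ℕ) + 1) = pc b (i : ℕ) := by
    have := pc_succ_lt b i.isLt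
    have hi' : b ⟨(i : ℕ), i.isLt⟩ = false := by
      have : (⟨(i : ℕ), i.isLt⟩ : Fin N) = i := Fin.ext rfl
      rw [this]; exact hi
    rw [this, hi']
    simp
  have h2 := pc_le b (i : ℕ)
  have h3 : pc (top N) ((i : ℕ) + 1) = (i : ℕ) + 1 := pc_top _ (by omega)
  omega

lemma good_top_left {v : Seq N} (hg : Good (top N) v) : v = top N := by
  by_contra hne
  obtain ⟨i, hi⟩ := ne_top_exists_false hne
  have h1 := hg.1 ((i : ℕ) + 1)
  have h2 := pc_lt_top hi
  have h3 : pc v ((i : ℕ) + 1) ≤ pc (top N) ((i : ℕ) + 1) := pc_le_pc_top _ _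
  omega

/-! ### The weight -/

def Mw (b : Seq N) : ℕ := ∑ k ∈ Finset.range (N + 1), pc b k

lemma sum_ite_le (m t : ℕ) : ∑ k ∈ Finset.range m, (if t ≤ k then 1 else 0) = m - t := by
  induction m with
  | zero => simp
  | succ n ih => rw [Finset.sum_range_succ, ih]; split_ifs <;> omega

lemma sum_ite_lt (m t : ℕ) : ∑ k ∈ Finset.range m, (if t < k then 1 else 0) = m - (t + 1) := by
  induction m with
  | zero => simp
  | succ n ih => rw [Finset.sum_range_succ, ih]; split_ifs <;> omega

lemma Mw_le_top (b : Seq N) : Mw b ≤ Mw (top N) :=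
  Finset.sum_le_sum fun k _ => pc_le_pc_top b k

lemma Mw_lt_top {b : Seq N} (h : b ≠ top N) : Mw b < Mw (top N) := by
  obtain ⟨i, hi⟩ := ne_top_exists_false h
  apply Finset.sum_lt_sum (fun k _ => pc_le_pc_top b k)
  exact ⟨(i : ℕ) + 1, Finset.mem_range.mpr (by have := i.isLt; omega), pc_lt_top hi⟩

lemma Mw_fD {l : ℕ} (hl1 : 1 ≤ l) (hl2 : l ≤ N) (hN : 2 ≤ N) {b c : Seq N}
    (h : fD N l b = some c) : Mw b < Mw c := by
  rcases Nat.lt_or_ge l N with h' | h'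
  · have hsp := (fD_lt_spec hl1 h' h).2.2
    have hsum := Finset.sum_congr rfl (fun k (_ : k ∈ Finset.range (N + 1)) => hsp k)
    rw [Finset.sum_add_distrib, Finset.sum_add_distrib, sum_ite_le, sum_ite_lt] at hsum
    have : Mw c + (N + 1 - (l + 1)) = Mw b + (N + 1 - l) := hsum
    omega
  · have hlN : l = N := by omega
    rw [hlN] at h
    have hsp := (fD_N_spec hN h).2.2
    have hsum := Finset.sum_congr rfl (fun k (_ : k ∈ Finset.range (N + 1)) => hsp k)
    rw [Finset.sum_add_distrib, Finset.sum_add_distrib, sum_ite_le, sum_ite_le] at hsum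
    have : Mw c = Mw b + (N + 1 - (N - 1)) + (N + 1 - N) := hsum
    omega

/-! ### Preservation of the invariant -/

lemma pc_le_fD {l : ℕ} (hl1 : 1 ≤ l) (hl2 : l ≤ N) (hN : 2 ≤ N) {b c : Seq N}
    (h : fD N l b = some c) : ∀ k, pc b k ≤ pc c k := by
  intro k
  rcases Nat.lt_or_ge l N with h' | h'
  · have := (fD_lt_spec hl1 h' h).2.2 k
    split_ifs at this <;> omega
  · have hlN : l = N := by omega
    rw [hlN] at h
    have := (fD_N_spec hN h).2.2 k
    split_ifs at this <;> omega

lemma pc_eD_le {l : ℕ} (hl1 : 1 ≤ l) (hl2 : l ≤ N) (hN : 2 ≤ N) {b c : Seq N}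
    (h : eD N l b = some c) : ∀ k, pc c k ≤ pc b k := by
  intro k
  rcases Nat.lt_or_ge l N with h' | h'
  · have := (eD_lt_spec hl1 h' h).2.2 k
    split_ifs at this <;> omega
  · have hlN : l = N := by omega
    rw [hlN] at h
    have := (eD_N_spec hN h).2.2 k
    split_ifs at this <;> omega

lemma even_fD {l : ℕ} (hl1 : 1 ≤ l) (hl2 : l ≤ N) (hN : 2 ≤ N) {b c : Seq N}
    (h : fD N l b = some c) (hb : Even (minusCount N b)) : Even (minusCount N c) := by
  have h1 := pc_N_add_mc b
  have h2 := pc_N_add_mc c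
  rw [Nat.even_iff] at hb ⊢
  rcases Nat.lt_or_ge l N with h' | h'
  · have := (fD_lt_spec hl1 h' h).2.2 N
    split_ifs at this <;> omega
  · have hlN : l = N := by omega
    rw [hlN] at h
    have := (fD_N_spec hN h).2.2 N
    split_ifs at this <;> omega

lemma even_eD {l : ℕ} (hl1 : 1 ≤ l) (hl2 : l ≤ N) (hN : 2 ≤ N) {b c : Seq N}
    (h : eD N l b = some c) (hb : Even (minusCount N b)) : Even (minusCount N c) := by
  have h1 := pc_N_add_mc b
  have h2 := pc_N_add_mc c
  rw [Nat.even_iff] at hb ⊢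
  rcases Nat.lt_or_ge l N with h' | h'
  · have := (eD_lt_spec hl1 h' h).2.2 N
    split_ifs at this <;> omega
  · have hlN : l = N := by omega
    rw [hlN] at h
    have := (eD_N_spec hN h).2.2 N
    split_ifs at this <;> omega

lemma dom_tf_lt {l : ℕ} (hl1 : 1 ≤ l) (h' : l < N) {u v u' : Seq N}
    (hdom : ∀ k, pc u k ≤ pc v k)
    (hfu : fD N l u = some u') (hfv : fD N l v = none) : ∀ k, pc u' k ≤ pc v k := by
  have hA : l - 1 < N := by omega
  have hB : l < N := by omega
  obtain ⟨hu1, hu2, hequ⟩ := fD_lt_spec hl1 h' hfu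
  have hu1' : u ⟨l - 1, hA⟩ = false := hu1
  have hu2' : u ⟨l, hB⟩ = true := hu2
  have key : pc u l < pc v l := by
    by_contra hle
    have e1 : pc u l = pc u (l - 1) + (if u ⟨l - 1, hA⟩ = true then 1 else 0) := by
      have h0 := pc_succ_lt u hA
      rw [show l - 1 + 1 = l from by omega] at h0
      exact h0
    have e2 : pc u (l + 1) = pc u l + (if u ⟨l, hB⟩ = true then 1 else 0) := pc_succ_lt u hB
    have e3 : pc v l = pc v (l - 1) + (if v ⟨l - 1, hA⟩ = true then 1 else 0) := by
      have h0 := pc_succ_lt v hA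
      rw [show l - 1 + 1 = l from by omega] at h0
      exact h0
    have e4 : pc v (l + 1) = pc v l + (if v ⟨l, hB⟩ = true then 1 else 0) := pc_succ_lt v hB
    have d1 := hdom (l - 1)
    have d2 := hdom (l + 1)
    rw [hu1'] at e1
    rw [hu2'] at e2
    simp only [Bool.false_eq_true, if_false, if_true, add_zero] at e1 e2
    have hv1 : v ⟨l - 1, hA⟩ = false := by
      cases hb : v ⟨l - 1, hA⟩
      · rfl
      · rw [hb] at e3; simp only [if_true] at e3; omega
    have hv2 : v ⟨l, hB⟩ = true := by
      cases hb : v ⟨l, hB⟩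
      · rw [hb] at e4
        simp only [Bool.false_eq_true, if_false, add_zero] at e4
        omega
      · rfl
    rw [fD_lt_eq hl1 h', if_pos ⟨hv1, hv2⟩] at hfv
    simp at hfv
  intro k
  have heq := hequ k
  have hd := hdom k
  rcases lt_trichotomy k l with hk | rfl | hk
  · split_ifs at heq <;> omega
  · split_ifs at heq <;> omega
  · split_ifs at heq <;> omega

lemma dom_tf_N (hN : 2 ≤ N) {u v u' : Seq N}
    (hdom : ∀ k, pc u k ≤ pc v k) (hpar : pc u N % 2 = pc v N % 2)
    (hfu : fD N N u = some u') (hfv : fD N N v = none) : ∀ k, pc u' k ≤ pc v k := by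
  have hA : N - 2 < N := by omega
  have hB : N - 1 < N := by omega
  obtain ⟨hu1, hu2, hequ⟩ := fD_N_spec hN hfu
  have hu1' : u ⟨N - 2, hA⟩ = false := hu1
  have hu2' : u ⟨N - 1, hB⟩ = false := hu2
  have e1 : pc u (N - 1) = pc u (N - 2) + (if u ⟨N - 2, hA⟩ = true then 1 else 0) := by
    have h0 := pc_succ_lt u hA
    rw [show N - 2 + 1 = N - 1 from by omega] at h0
    exact h0
  have e2 : pc u N = pc u (N - 1) + (if u ⟨N - 1, hB⟩ = true then 1 else 0) := by
    have h0 := pc_succ_lt u hB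
    rw [show N - 1 + 1 = N from by omega] at h0
    exact h0
  have e3 : pc v (N - 1) = pc v (N - 2) + (if v ⟨N - 2, hA⟩ = true then 1 else 0) := by
    have h0 := pc_succ_lt v hA
    rw [show N - 2 + 1 = N - 1 from by omega] at h0
    exact h0
  have e4 : pc v N = pc v (N - 1) + (if v ⟨N - 1, hB⟩ = true then 1 else 0) := by
    have h0 := pc_succ_lt v hB
    rw [show N - 1 + 1 = N from by omega] at h0
    exact h0
  rw [hu1'] at e1
  rw [hu2'] at e2
  simp only [Bool.false_eq_true, if_false, add_zero] at e1 e2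
  have d0 := hdom (N - 2)
  have d1 := hdom (N - 1)
  have d2 := hdom N
  have key : pc u (N - 1) + 1 ≤ pc v (N - 1) ∧ pc u N + 2 ≤ pc v N := by
    cases hv1 : v ⟨N - 2, hA⟩ with
    | false =>
      cases hv2 : v ⟨N - 1, hB⟩ with
      | false =>
        exfalso
        rw [fD_N_eq hN, if_pos ⟨hv1, hv2⟩] at hfv
        simp at hfv
      | true =>
        rw [hv1] at e3; rw [hv2] at e4
        simp only [Bool.false_eq_true, if_false, if_true, add_zero] at e3 e4
        omega
    | true =>
      cases hv2 : v ⟨N - 1, hB⟩ with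
      | false =>
        rw [hv1] at e3; rw [hv2] at e4
        simp only [Bool.false_eq_true, if_false, if_true, add_zero] at e3 e4
        omega
      | true =>
        rw [hv1] at e3; rw [hv2] at e4
        simp only [Bool.false_eq_true, if_false, if_true, add_zero] at e3 e4
        omega
  intro k
  have heq := hequ k
  have hd := hdom k
  rcases le_or_gt N k with hk | hk
  · have g1 : pc u' k = pc u k + 2 := by rw [heq]; split_ifs <;> omega
    have g2 := pc_ge u hk
    have g3 := pc_ge v hk
    have g4 := pc_ge u' hk
    omega
  · rcases le_or_gt (N - 1) k with hk2 | hk2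
    · have hkeq : k = N - 1 := by omega
      subst hkeq
      split_ifs at heq <;> omega
    · split_ifs at heq <;> omega

lemma dom_te_lt {l : ℕ} (hl1 : 1 ≤ l) (h' : l < N) {u v v' : Seq N}
    (hdom : ∀ k, pc u k ≤ pc v k)
    (hev : eD N l v = some v') (heu : eD N l u = none) : ∀ k, pc u k ≤ pc v' k := by
  have hA : l - 1 < N := by omega
  have hB : l < N := by omega
  obtain ⟨hv1, hv2, heqv⟩ := eD_lt_spec hl1 h' hev
  have hv1' : v ⟨l - 1, hA⟩ = true := hv1
  have hv2' : v ⟨l, hB⟩ = false := hv2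
  have key : pc u l < pc v l := by
    by_contra hle
    have e1 : pc u l = pc u (l - 1) + (if u ⟨l - 1, hA⟩ = true then 1 else 0) := by
      have h0 := pc_succ_lt u hA
      rw [show l - 1 + 1 = l from by omega] at h0
      exact h0
    have e2 : pc u (l + 1) = pc u l + (if u ⟨l, hB⟩ = true then 1 else 0) := pc_succ_lt u hB
    have e3 : pc v l = pc v (l - 1) + (if v ⟨l - 1, hA⟩ = true then 1 else 0) := by
      have h0 := pc_succ_lt v hA
      rw [show l - 1 + 1 = l from by omega] at h0
      exact h0
    have e4 : pc v (l + 1) = pc v l + (if v ⟨l, hB⟩ = true then 1 else 0) := pc_succ_lt v hB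
    have d1 := hdom (l - 1)
    have d2 := hdom (l + 1)
    rw [hv1'] at e3
    rw [hv2'] at e4
    simp only [Bool.false_eq_true, if_false, if_true, add_zero] at e3 e4
    have hu1 : u ⟨l - 1, hA⟩ = true := by
      cases hb : u ⟨l - 1, hA⟩
      · rw [hb] at e1
        simp only [Bool.false_eq_true, if_false, add_zero] at e1
        omega
      · rfl
    have hu2 : u ⟨l, hB⟩ = false := by
      cases hb : u ⟨l, hB⟩
      · rfl
      · rw [hb] at e2; simp only [if_true] at e2; omega
    rw [eD_lt_eq hl1 h', if_pos ⟨hu1, hu2⟩] at heu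
    simp at heu
  intro k
  have heq := heqv k
  have hd := hdom k
  rcases lt_trichotomy k l with hk | rfl | hk
  · split_ifs at heq <;> omega
  · split_ifs at heq <;> omega
  · split_ifs at heq <;> omega

lemma dom_te_N (hN : 2 ≤ N) {u v v' : Seq N}
    (hdom : ∀ k, pc u k ≤ pc v k) (hpar : pc u N % 2 = pc v N % 2)
    (hev : eD N N v = some v') (heu : eD N N u = none) : ∀ k, pc u k ≤ pc v' k := by
  have hA : N - 2 < N := by omega
  have hB : N - 1 < N := by omega
  obtain ⟨hv1, hv2, heqv⟩ := eD_N_spec hN hev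
  have hv1' : v ⟨N - 2, hA⟩ = true := hv1
  have hv2' : v ⟨N - 1, hB⟩ = true := hv2
  have e1 : pc u (N - 1) = pc u (N - 2) + (if u ⟨N - 2, hA⟩ = true then 1 else 0) := by
    have h0 := pc_succ_lt u hA
    rw [show N - 2 + 1 = N - 1 from by omega] at h0
    exact h0
  have e2 : pc u N = pc u (N - 1) + (if u ⟨N - 1, hB⟩ = true then 1 else 0) := by
    have h0 := pc_succ_lt u hB
    rw [show N - 1 + 1 = N from by omega] at h0
    exact h0
  have e3 : pc v (N - 1) = pc v (N - 2) + (if v ⟨N - 2, hA⟩ = true then 1 else 0) := by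
    have h0 := pc_succ_lt v hA
    rw [show N - 2 + 1 = N - 1 from by omega] at h0
    exact h0
  have e4 : pc v N = pc v (N - 1) + (if v ⟨N - 1, hB⟩ = true then 1 else 0) := by
    have h0 := pc_succ_lt v hB
    rw [show N - 1 + 1 = N from by omega] at h0
    exact h0
  rw [hv1'] at e3
  rw [hv2'] at e4
  simp only [if_true] at e3 e4
  have d0 := hdom (N - 2)
  have d1 := hdom (N - 1)
  have d2 := hdom N
  have key : pc u (N - 1) + 1 ≤ pc v (N - 1) ∧ pc u N + 2 ≤ pc v N := by
    cases hu1 : u ⟨N - 2, hA⟩ with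
    | true =>
      cases hu2 : u ⟨N - 1, hB⟩ with
      | true =>
        exfalso
        rw [eD_N_eq hN, if_pos ⟨hu1, hu2⟩] at heu
        simp at heu
      | false =>
        rw [hu1] at e1; rw [hu2] at e2
        simp only [Bool.false_eq_true, if_false, if_true, add_zero] at e1 e2
        omega
    | false =>
      cases hu2 : u ⟨N - 1, hB⟩ with
      | false =>
        rw [hu1] at e1; rw [hu2] at e2
        simp only [Bool.false_eq_true, if_false, if_true, add_zero] at e1 e2
        omega
      | true =>
        rw [hu1] at e1; rw [hu2] at e2
        simp only [Bool.false_eq_true, if_false, if_true, add_zero] at e1 e2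
        omega
  intro k
  have heq := heqv k
  have hd := hdom k
  rcases le_or_gt N k with hk | hk
  · have g1 : pc v' k + 2 = pc v k := by rw [← heq]; split_ifs <;> omega
    have g2 := pc_ge u hk
    have g3 := pc_ge v hk
    have g4 := pc_ge v' hk
    omega
  · rcases le_or_gt (N - 1) k with hk2 | hk2
    · have hkeq : k = N - 1 := by omega
      subst hkeq
      split_ifs at heq <;> omega
    · split_ifs at heq <;> omega

lemma Good_tfD {l : ℕ} (hl1 : 1 ≤ l) (hl2 : l ≤ N) (hN : 2 ≤ N) {u v u' v' : Seq N}
    (hg : Good u v) (h : tfD N l (u, v) = some (u', v')) : Good u' v' := by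
  have hpar := good_parity hg
  obtain ⟨hdom, heu, hev⟩ := hg
  rcases tfD_cases hl1 hl2 hN h with ⟨rfl, hfv, -⟩ | ⟨rfl, hfu, hfv⟩
  · exact ⟨fun k => le_trans (hdom k) (pc_le_fD hl1 hl2 hN hfv k), heu,
      even_fD hl1 hl2 hN hfv hev⟩
  · refine ⟨?_, even_fD hl1 hl2 hN hfu heu, hev⟩
    rcases Nat.lt_or_ge l N with h' | h'
    · exact dom_tf_lt hl1 h' hdom hfu hfv
    · have hlN : l = N := by omega
      rw [hlN] at hfu hfv
      exact dom_tf_N hN hdom hpar hfu hfv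

lemma Good_teD {l : ℕ} (hl1 : 1 ≤ l) (hl2 : l ≤ N) (hN : 2 ≤ N) {u v u' v' : Seq N}
    (hg : Good u v) (h : teD N l (u, v) = some (u', v')) : Good u' v' := by
  have hpar := good_parity hg
  obtain ⟨hdom, heu, hev⟩ := hg
  rcases teD_cases hl1 hl2 hN h with ⟨rfl, hevs, heun⟩ | ⟨rfl, heus, hfv⟩
  · refine ⟨?_, heu, even_eD hl1 hl2 hN hevs hev⟩
    rcases Nat.lt_or_ge l N with h' | h'
    · exact dom_te_lt hl1 h' hdom hevs heun
    · have hlN : l = N := by omega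
      rw [hlN] at hevs heun
      exact dom_te_N hN hdom hpar hevs heun
  · exact ⟨fun k => le_trans (pc_eD_le hl1 hl2 hN heus k) (hdom k),
      even_eD hl1 hl2 hN heus heu, hev⟩

lemma conn_good (hN : 2 ≤ N) {p q : Seq N × Seq N} (h : ConnD N p q) :
    Good p.1 p.2 ↔ Good q.1 q.2 := by
  induction h with
  | rel x y hxy =>
    obtain ⟨l, hl1, hl2, hop⟩ := hxy
    obtain ⟨x1, x2⟩ := x
    obtain ⟨y1, y2⟩ := y
    constructor
    · intro hg
      rcases hop with he | hf
      · exact Good_teD hl1 hl2 hN hg he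
      · exact Good_tfD hl1 hl2 hN hg hf
    · intro hg
      rcases hop with he | hf
      · exact Good_tfD hl1 hl2 hN hg (teD_tfD hl1 hl2 hN he)
      · exact Good_teD hl1 hl2 hN hg (tfD_teD hl1 hl2 hN hf)
  | refl x => exact Iff.rfl
  | symm x y _ ih => exact ih.symm
  | trans x y z _ _ ih1 ih2 => exact ih1.trans ih2

lemma exists_fD (hN : 2 ≤ N) {b : Seq N} (hb : Even (minusCount N b)) (hne : b ≠ top N) :
    ∃ l, 1 ≤ l ∧ l ≤ N ∧ fD N l b ≠ none := by
  by_cases hdesc : ∃ i : Fin N, ∃ h : (i : ℕ) + 1 < N, b i = false ∧ b ⟨(i : ℕ) + 1, by omega⟩ = true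
  · obtain ⟨i, hi, hb1, hb2⟩ := hdesc
    refine ⟨(i : ℕ) + 1, by omega, by omega, ?_⟩
    have hb1' : b ⟨(i : ℕ) + 1 - 1, by omega⟩ = false := by
      have : (⟨(i : ℕ) + 1 - 1, by omega⟩ : Fin N) = i := Fin.ext (by simp)
      rw [this]; exact hb1
    rw [fD_lt_eq (by omega) hi, if_pos ⟨hb1', hb2⟩]
    simp
  · push_neg at hdesc
    -- no descent: falses propagate upwards
    have mono : ∀ m : ℕ, ∀ hm : m < N, b ⟨m, hm⟩ = false →
        ∀ j, m ≤ j → ∀ hj : j < N, b ⟨j, hj⟩ = false := by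
      intro m hm hbm j hmj hj
      induction j with
      | zero =>
        have : m = 0 := by omega
        subst this; exact hbm
      | succ n ih =>
        rcases Nat.lt_or_ge n m with hc | hc
        · have : m = n + 1 := by omega
          subst this; exact hbm
        · have hn : n < N := by omega
          have hbn : b ⟨n, hn⟩ = false := ih hc hn
          have := hdesc ⟨n, hn⟩ hj hbn
          revert this
          cases hb' : b ⟨n + 1, hj⟩
          · intro; rfl
          · intro hcon; exact absurd rfl hcon
    by_cases hN2 : b ⟨N - 2, by omega⟩ = false
    · have hN1 : b ⟨N - 1, by omega⟩ = false :=
        mono (N - 2) (by omega) hN2 (N - 1) (by omega) (by omega)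
      refine ⟨N, by omega, le_rfl, ?_⟩
      rw [fD_N_eq hN, if_pos ⟨hN2, hN1⟩]
      simp
    · exfalso
      -- all entries below N-1 are true
      have hall : ∀ i : Fin N, (i : ℕ) < N - 1 → b i = true := by
        intro i hi
        cases hb' : b i
        · exfalso
          apply hN2
          have : b ⟨N - 2, by omega⟩ = false := by
            have := mono (i : ℕ) i.isLt
              (by rw [show (⟨(i : ℕ), i.isLt⟩ : Fin N) = i from Fin.ext rfl]; exact hb')
              (N - 2) (by omega) (by omega)
            exact this
          exact this
        · rfl
      by_cases hlast : b ⟨N - 1, by omega⟩ = false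
      · -- minusCount = 1, contradiction with evenness
        have hset : Finset.univ.filter (fun i => b i = false) = {(⟨N - 1, by omega⟩ : Fin N)} := by
          ext i
          simp only [Finset.mem_filter, Finset.mem_univ, true_and, Finset.mem_singleton]
          constructor
          · intro hif
            by_contra hne2
            have hi : (i : ℕ) < N - 1 := by
              rcases Nat.lt_or_ge (i : ℕ) (N - 1) with h1 | h1
              · exact h1
              · exfalso; apply hne2; apply Fin.ext; simp; have := i.isLt; omega
            rw [hall i hi] at hif
            exact absurd hif (by simp)
          · intro hieq; rw [hieq]; exact hlast
        have : minusCount N b = 1 := by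
          unfold minusCount
          rw [hset, Finset.card_singleton]
        rw [this] at hb
        exact (Nat.not_even_one) hb
      · -- b = top, contradiction
        apply hne
        funext i
        rcases Nat.lt_or_ge (i : ℕ) (N - 1) with h1 | h1
        · rw [hall i h1]; rfl
        · have : i = (⟨N - 1, by omega⟩ : Fin N) := Fin.ext (by simp; have := i.isLt; omega)
          rw [this]
          revert hlast
          cases b (⟨N - 1, by omega⟩ : Fin N)
          · intro hcon; exact absurd rfl hcon
          · intro; rfl

lemma exists_move (hN : 2 ≤ N) {u v : Seq N} (hg : Good u v) (hne : (u, v) ≠ (top N, top N)) :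
    ∃ l u' v', 1 ≤ l ∧ l ≤ N ∧ tfD N l (u, v) = some (u', v') ∧
      Mw u + Mw v < Mw u' + Mw v' := by
  have hune : u ≠ top N := by
    intro hu
    subst hu
    apply hne
    rw [good_top_left hg]
  obtain ⟨l, hl1, hl2, hfu⟩ := exists_fD hN hg.2.1 hune
  rcases hfu' : fD N l u with _ | u0
  · exact absurd hfu' hfu
  have heu : eD N l u = none := fD_eD_none hl1 hl2 hN hfu
  rcases hfv : fD N l v with _ | v0
  · -- act on u
    refine ⟨l, u0, v, hl1, hl2, ?_, ?_⟩
    · unfold tfD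
      dsimp only
      rw [opMax_eD hl1 hl2 hN, opMax_fD hl1 hl2 hN, if_neg (by rw [if_pos heu, if_pos hfv]; omega),
        hfu']
      rfl
    · have := Mw_fD hl1 hl2 hN hfu'
      omega
  · -- act on v
    refine ⟨l, u, v0, hl1, hl2, ?_, ?_⟩
    · unfold tfD
      dsimp only
      rw [opMax_eD hl1 hl2 hN, opMax_fD hl1 hl2 hN,
        if_pos (by rw [if_pos heu, if_neg (by simp [hfv])]; omega), hfv]
      rfl
    · have := Mw_fD hl1 hl2 hN hfv
      omega

lemma good_to_conn (hN : 2 ≤ N) :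
    ∀ n, ∀ u v : Seq N, Good u v → 2 * Mw (top N) ≤ Mw u + Mw v + n →
      ConnD N (u, v) (top N, top N) := by
  intro n
  induction n with
  | zero =>
    intro u v hg hm
    have h1 := Mw_le_top u
    have h2 := Mw_le_top v
    have hu : u = top N := by
      by_contra hc
      have := Mw_lt_top hc
      omega
    have hv : v = top N := by
      by_contra hc
      have := Mw_lt_top hc
      omega
    rw [hu, hv]
    exact Relation.EqvGen.refl _
  | succ n ih =>
    intro u v hg hm
    by_cases htop : (u, v) = (top N, top N)
    · rw [htop]; exact Relation.EqvGen.refl _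
    · obtain ⟨l, u', v', hl1, hl2, hstep, hlt⟩ := exists_move hN hg htop
      have hg' : Good u' v' := Good_tfD hl1 hl2 hN hg hstep
      have hconn : ConnD N (u', v') (top N, top N) := ih u' v' hg' (by omega)
      exact Relation.EqvGen.trans _ _ _
        (Relation.EqvGen.rel _ _ ⟨l, hl1, hl2, Or.inr hstep⟩) hconn

/-! ### Columns and counting -/

lemma getD_eq_get (l : List ℕ) (n : ℕ) (h : n < l.length) :
    l.getD n 0 = l.get ⟨n, h⟩ := by
  simp [List.getD_eq_getElem?_getD, List.getElem?_eq_getElem, h]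

lemma sorted_getD_lt {s : List ℕ} (hs : s.Pairwise (· < ·)) {i j : ℕ} (hij : i < j)
    (hj : j < s.length) : s.getD i 0 < s.getD j 0 := by
  rw [getD_eq_get s i (by omega), getD_eq_get s j hj]
  exact hs.rel_get_of_lt (by simpa using hij)

lemma countP_zero_of_head {t : List ℕ} {x m : ℕ} (hxm : ¬ x ≤ m) (hx : ∀ y ∈ t, x ≤ y) :
    t.countP (fun z => decide (z ≤ m)) = 0 := by
  rw [List.countP_eq_zero]
  intro y hy
  simp only [decide_eq_true_eq]
  intro hym
  exact hxm (le_trans (hx y hy) hym)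

lemma sorted_getD_le_iff : ∀ {s : List ℕ}, s.Pairwise (· ≤ ·) → ∀ {r : ℕ}, r < s.length → ∀ m,
    (s.getD r 0 ≤ m ↔ r < s.countP (fun z => decide (z ≤ m))) := by
  intro s
  induction s with
  | nil => intro _ r hr; simp at hr
  | cons x t ih =>
    intro hs r hr m
    have hs' : t.Pairwise (· ≤ ·) := hs.of_cons
    have hx : ∀ y ∈ t, x ≤ y := fun _ hy => List.rel_of_pairwise_cons hs hy
    simp only [List.countP_cons]
    cases r with
    | zero =>
      simp only [List.getD_cons_zero]
      constructor
      · intro h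
        have hd : (if decide (x ≤ m) = true then (1 : ℕ) else 0) = 1 := by simp [h]
        omega
      · intro h
        by_contra hxm
        have hd : (if decide (x ≤ m) = true then (1 : ℕ) else 0) = 0 := by simp [hxm]
        have h0 := countP_zero_of_head hxm hx
        omega
    | succ r' =>
      simp only [List.getD_cons_succ]
      rw [ih hs' (by simpa using hr) m]
      by_cases hxm : x ≤ m
      · have hd : (if decide (x ≤ m) = true then (1 : ℕ) else 0) = 1 := by simp [hxm]
        constructor <;> intro <;> omega
      · have hd : (if decide (x ≤ m) = true then (1 : ℕ) else 0) = 0 := by simp [hxm]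
        have h0 := countP_zero_of_head hxm hx
        constructor <;> intro <;> omega

lemma countP_sort (F : Finset ℕ) (p : ℕ → Prop) [DecidablePred p] :
    (F.sort (· ≤ ·)).countP (fun x => decide (p x)) = (F.filter p).card := by
  have h1 := (Finset.sort_perm_toList F (· ≤ ·)).countP_eq (fun x => decide (p x))
  rw [h1]
  have h2 : F.toList.countP (fun x => decide (p x)) = Multiset.countP p F.val := by
    rw [← Multiset.coe_countP p F.toList, Finset.coe_toList]
  rw [h2, Multiset.countP_eq_card_filter]
  rfl

/-- The code map underlying `colList`. -/
def codeF (N : ℕ) (b : Seq N) : Fin N → ℕ := fun i => if b i then (i : ℕ) + 1 else 2 * N - (i : ℕ)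

lemma colList_eq (b : Seq N) :
    colList N b = ((Finset.univ.image (codeF N b)).sort (· ≤ ·)) := rfl

lemma codeF_inj (b : Seq N) : Function.Injective (codeF N b) := by
  intro i j hij
  have hi := i.isLt
  have hj := j.isLt
  unfold codeF at hij
  by_cases h1 : b i = true <;> by_cases h2 : b j = true <;>
    simp [h1, h2] at hij <;>
    first
      | exact Fin.ext (by omega)
      | assumption
      | exact absurd hij (by omega)

lemma card_imageF (b : Seq N) : (Finset.univ.image (codeF N b)).card = N := by
  rw [Finset.card_image_of_injective _ (codeF_inj b), Finset.card_univ, Fintype.card_fin]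

lemma colList_length (b : Seq N) : (colList N b).length = N := by
  rw [colList_eq, Finset.length_sort, card_imageF]

/-- Number of letters of the column of `b` that are `≤ m`. -/
def cnt (m : ℕ) (b : Seq N) : ℕ := ((Finset.univ.image (codeF N b)).filter (fun x => x ≤ m)).card

lemma cnt_countP (m : ℕ) (b : Seq N) :
    (colList N b).countP (fun z => decide (z ≤ m)) = cnt m b := by
  rw [colList_eq, countP_sort]
  rfl

lemma cnt_filter (m : ℕ) (b : Seq N) :
    cnt m b = (Finset.univ.filter (fun i => codeF N b i ≤ m)).card := by
  unfold cnt
  rw [Finset.filter_image, Finset.card_image_of_injective _ (codeF_inj b)]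

lemma cnt_le_N (m : ℕ) (b : Seq N) : cnt m b ≤ N := by
  rw [cnt_filter]
  calc (Finset.univ.filter (fun i => codeF N b i ≤ m)).card
      ≤ Finset.univ.card := Finset.card_filter_le _ _
    _ = N := by rw [Finset.card_univ, Fintype.card_fin]

lemma cnt_of_le (b : Seq N) {m : ℕ} (hm : m ≤ N) : cnt m b = pc b m := by
  rw [cnt_filter, Finset.card_filter]
  unfold pc
  apply Finset.sum_congr rfl
  intro i _
  have hi := i.isLt
  by_cases hb : b i = true
  · simp only [codeF, hb, if_true, and_true]
    split_ifs <;> omega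
  · have hb' : b i = false := by revert hb; cases b i <;> simp
    simp only [codeF, hb', Bool.false_eq_true, if_false, and_false]
    rw [if_neg (by omega)]

lemma sum_fin_lt (k : ℕ) (hk : k ≤ N) : (∑ i : Fin N, if (i : ℕ) < k then (1 : ℕ) else 0) = k := by
  have h : pc (top N) k = k := pc_top (N := N) k hk
  unfold pc at h
  have h2 : (∑ i : Fin N, if (i : ℕ) < k then (1 : ℕ) else 0)
      = (∑ i : Fin N, if (i : ℕ) < k ∧ top N i = true then 1 else 0) := by
    apply Finset.sum_congr rfl
    intro i _
    simp [top]
  rw [h2]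
  exact h

lemma sum_fin_ge (k : ℕ) (hk : k ≤ N) :
    (∑ i : Fin N, if k ≤ (i : ℕ) then (1 : ℕ) else 0) = N - k := by
  have h1 : ∀ i : Fin N, (if k ≤ (i : ℕ) then (1 : ℕ) else 0) + (if (i : ℕ) < k then 1 else 0)
      = 1 := by
    intro i; split_ifs <;> omega
  have h2 : (∑ i : Fin N, ((if k ≤ (i : ℕ) then (1 : ℕ) else 0)
      + (if (i : ℕ) < k then 1 else 0))) = N := by
    rw [Finset.sum_congr rfl fun i _ => h1 i]
    simp
  rw [Finset.sum_add_distrib, sum_fin_lt k hk] at h2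
  omega

lemma cnt_of_ge (b : Seq N) {m : ℕ} (hm : N ≤ m) (hm2 : m ≤ 2 * N) :
    cnt m b = (m - N) + pc b (2 * N - m) := by
  rw [cnt_filter, Finset.card_filter]
  unfold pc
  have key : ∀ i : Fin N, (if codeF N b i ≤ m then (1 : ℕ) else 0)
      = (if (i : ℕ) < 2 * N - m ∧ b i = true then 1 else 0)
        + (if 2 * N - m ≤ (i : ℕ) then 1 else 0) := by
    intro i
    have hi := i.isLt
    by_cases hb : b i = true
    · simp only [codeF, hb, if_true, and_true]
      rw [if_pos (by omega)]
      split_ifs <;> omega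
    · have hb' : b i = false := by revert hb; cases b i <;> simp
      simp only [codeF, hb', Bool.false_eq_true, if_false, and_false, zero_add]
      split_ifs <;> omega
  rw [Finset.sum_congr rfl fun i _ => key i, Finset.sum_add_distrib,
    sum_fin_ge (2 * N - m) (by omega)]
  omega

lemma cnt_of_top (b : Seq N) {m : ℕ} (hm : 2 * N ≤ m) : cnt m b = N := by
  rw [cnt_filter]
  rw [Finset.filter_true_of_mem]
  · rw [Finset.card_univ, Fintype.card_fin]
  · intro i _
    have hi := i.isLt
    unfold codeF
    split_ifs <;> omega

lemma dom_iff_cnt {u v : Seq N} :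
    (∀ k, pc u k ≤ pc v k) ↔ (∀ m, cnt m u ≤ cnt m v) := by
  constructor
  · intro hdom m
    rcases le_or_gt m N with hm | hm
    · rw [cnt_of_le u hm, cnt_of_le v hm]; exact hdom m
    · rcases le_or_gt m (2 * N) with hm2 | hm2
      · rw [cnt_of_ge u (by omega) hm2, cnt_of_ge v (by omega) hm2]
        have := hdom (2 * N - m)
        omega
      · rw [cnt_of_top u (by omega), cnt_of_top v (by omega)]
  · intro hcnt k
    rcases le_or_gt k N with hk | hk
    · rw [← cnt_of_le u hk, ← cnt_of_le v hk]; exact hcnt k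
    · rw [pc_ge u (by omega), pc_ge v (by omega), ← cnt_of_le u le_rfl, ← cnt_of_le v le_rfl]
      exact hcnt N

/-! ### Semistandardness versus dominance -/

lemma good_to_kSemi (hN : 2 ≤ N) {u v : Seq N} (hg : Good u v) :
    kSemiD N N (colList N u) (colList N v) := by
  have hcnt := dom_iff_cnt.mp hg.1
  have hpar := good_parity hg
  have hau : (colList N u).length = N := colList_length u
  have hav : (colList N v).length = N := colList_length v
  have hsu : (colList N u).Pairwise (· ≤ ·) := by rw [colList_eq]; exact Finset.pairwise_sort _ _
  have hsv : (colList N v).Pairwise (· ≤ ·) := by rw [colList_eq]; exact Finset.pairwise_sort _ _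
  have hslu : (colList N u).Pairwise (· < ·) := by rw [colList_eq]; exact (Finset.sortedLT_sort _).pairwise
  have hslv : (colList N v).Pairwise (· < ·) := by rw [colList_eq]; exact (Finset.sortedLT_sort _).pairwise
  refine ⟨le_rfl, fun r hr1 hr2 => ?_⟩
  rw [show N - N + r - 1 = r - 1 from by omega]
  have h1 : r - 1 < cnt ((colList N u).getD (r - 1) 0) u := by
    rw [← cnt_countP]
    exact (sorted_getD_le_iff hsu (by omega) ((colList N u).getD (r - 1) 0)).mp le_rfl
  have h2 : r - 1 < cnt ((colList N u).getD (r - 1) 0) v :=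
    lt_of_lt_of_le h1 (hcnt _)
  have h3 : (colList N v).getD (r - 1) 0 ≤ (colList N u).getD (r - 1) 0 :=
    (sorted_getD_le_iff hsv (by omega) _).mpr (by rw [cnt_countP]; exact h2)
  rcases eq_or_lt_of_le h3 with heq | hlt
  · exact Or.inl heq
  · refine Or.inr ⟨hlt, ?_⟩
    rintro ⟨hcN, haN1⟩
    have hv_ge : r - 1 < cnt N v := by
      rw [← cnt_countP]
      exact (sorted_getD_le_iff hsv (by omega) N).mp (le_of_eq hcN)
    have hv_le : cnt N v ≤ r := by
      rcases lt_or_ge r N with hrlt | hrge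
      · by_contra hc
        push_neg at hc
        have hg1 : (colList N v).getD r 0 ≤ N :=
          (sorted_getD_le_iff hsv (by omega) N).mpr (by rw [cnt_countP]; omega)
        have hg2 : (colList N v).getD (r - 1) 0 < (colList N v).getD r 0 :=
          sorted_getD_lt hslv (by omega) (by omega)
        omega
      · have := cnt_le_N N v
        omega
    have hu_le : cnt N u ≤ r - 1 := by
      by_contra hc
      push_neg at hc
      have hg1 : (colList N u).getD (r - 1) 0 ≤ N :=
        (sorted_getD_le_iff hsu (by omega) N).mpr (by rw [cnt_countP]; omega)
      omega
    have hu_ge : r - 1 ≤ cnt N u := by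
      rcases lt_or_ge r 2 with hr2 | hr2
      · omega
      · have hg2 : (colList N u).getD (r - 2) 0 < (colList N u).getD (r - 1) 0 :=
          sorted_getD_lt hslu (by omega) (by omega)
        have hg1 : r - 2 < cnt N u := by
          rw [← cnt_countP]
          exact (sorted_getD_le_iff hsu (by omega) N).mp (by omega)
        omega
    have hpu : cnt N u = pc u N := cnt_of_le u le_rfl
    have hpv : cnt N v = pc v N := cnt_of_le v le_rfl
    omega

lemma kSemi_to_dom (hN : 2 ≤ N) {u v : Seq N}
    (hss : kSemiD N N (colList N u) (colList N v)) : ∀ k, pc u k ≤ pc v k := by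
  have hau : (colList N u).length = N := colList_length u
  have hav : (colList N v).length = N := colList_length v
  have hsu : (colList N u).Pairwise (· ≤ ·) := by rw [colList_eq]; exact Finset.pairwise_sort _ _
  have hsv : (colList N v).Pairwise (· ≤ ·) := by rw [colList_eq]; exact Finset.pairwise_sort _ _
  rw [dom_iff_cnt]
  intro m
  by_cases hq : cnt m u = 0
  · omega
  · have hq1 : 1 ≤ cnt m u := by omega
    have hqN : cnt m u ≤ N := cnt_le_N m u
    have hgA : (colList N u).getD (cnt m u - 1) 0 ≤ m :=
      (sorted_getD_le_iff hsu (by omega) m).mpr (by rw [cnt_countP]; omega)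
    have hpre := hss.2 (cnt m u) hq1 hqN
    rw [show N - N + cnt m u - 1 = cnt m u - 1 from by omega] at hpre
    have hle : (colList N v).getD (cnt m u - 1) 0 ≤ (colList N u).getD (cnt m u - 1) 0 := by
      rcases hpre with he | hlt
      · exact le_of_eq he
      · exact le_of_lt hlt.1
    have hfin : cnt m u - 1 < cnt m v := by
      rw [← cnt_countP m v]
      exact (sorted_getD_le_iff hsv (by omega) m).mp (le_trans hle hgA)
    omega

end Aux

/-- Koga's criterion, type `D`, case (1B).  For `N ≥ 2` and
`u, v ∈ B_sp^+`, the element `u ⊗ v` lies in the connected component of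
`(+,…,+) ⊗ (+,…,+)` iff the pair of columns `(t(u), t(v))` is `N`-semistandard. -/
theorem koga_D_1B (N : ℕ) (hN : 2 ≤ N) (u v : Seq N)
    (hu : BspPlus N u) (hv : BspPlus N v) :
    ConnD N (u, v) (top N, top N) ↔
      kSemiD N N (colList N u) (colList N v) := by
  constructor
  · intro hconn
    have hg : Good u v := (conn_good hN hconn).mpr good_top
    exact good_to_kSemi hN hg
  · intro hss
    have hg : Good u v := ⟨kSemi_to_dom hN hss, hu, hv⟩
    exact good_to_conn hN (2 * Mw (top N)) u v hg (by omega)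

end CrystalPaper
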